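/- arXiv:1308.6615 — 4 statements merged into one kernel-verified Lean document; each statement's English description precedes it below -/
import Mathlib

section
/- In a CAT(0) space X, for any three points x, y, z, the concatenated path from x to the nearest-point projection of x onto the geodesic [y,z], followed by the geodesic from that projection point to z, is a (3,0)-quasi-geodesic. -/
/-!
Geodesics in a CAT(0) space are unique (apply the CN inequality at the midpoint of two
candidate points), so `[π x, z]` is a subsegment of `[y, z]` and each of its points is at
distance at least `d(x, π x)` from `x`. For `p ∈ [x, π x]` and `q ∈ [π x, z]`, put
`a = d(p, π x)` and `b = d(π x, q)`: the triangle inequality gives `d(p, q) ≥ a` and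
`d(p, q) ≥ b - a`, hence `3 d(p, q) ≥ a + b`, while `d(p, q) ≤ a + b` trivially.
-/

open Set Metric Topology
open scoped ENNReal

/-- A geodesic parameterized by arc length on a subset of `ℝ`. -/
def IsGeodesicOn {X : Type*} [MetricSpace X] (γ : ℝ → X) (I : Set ℝ) : Prop :=
  ∀ ⦃s⦄, s ∈ I → ∀ ⦃t⦄, t ∈ I → dist (γ s) (γ t) = |s - t|

/-- A geodesic metric space: any two points are joined by a geodesic. -/
class GeodesicSpace (X : Type*) [MetricSpace X] : Prop where
  geodesic : ∀ x y : X, ∃ γ : ℝ → X, γ 0 = x ∧ γ (dist x y) = y ∧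
    IsGeodesicOn γ (Set.Icc 0 (dist x y))

/-- A CAT(0) space: a geodesic metric space satisfying the CN (Bruhat–Tits) inequality. -/
class CAT0Space (X : Type*) [MetricSpace X] extends GeodesicSpace X : Prop where
  cn : ∀ x y z m : X, dist y m = dist y z / 2 → dist z m = dist y z / 2 →
    dist x m ^ 2 ≤ (dist x y ^ 2 + dist x z ^ 2) / 2 - dist y z ^ 2 / 4

/-- A `(K,L)`-quasi-geodesic on a subset of `ℝ`. -/
def IsQuasiGeodesicOn {X : Type*} [MetricSpace X] (K L : ℝ) (γ : ℝ → X) (I : Set ℝ) : Prop :=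
  ∀ s ∈ I, ∀ t ∈ I,
    |s - t| / K - L ≤ dist (γ s) (γ t) ∧ dist (γ s) (γ t) ≤ K * |s - t| + L

/-- The set `A` (e.g. the image of a (quasi-)geodesic) is Morse with gauge `M`:
every `(K,L)`-quasi-geodesic with endpoints on `A` stays in the `M K L`-neighborhood of `A`. -/
def IsMorseWith {X : Type*} [MetricSpace X] (M : ℝ → ℝ → ℝ) (A : Set X) : Prop :=
  ∀ K L : ℝ, 1 ≤ K → 0 ≤ L → ∀ (σ : ℝ → X) (a b : ℝ), a ≤ b →
    IsQuasiGeodesicOn K L σ (Set.Icc a b) → σ a ∈ A → σ b ∈ A →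
    ∀ t ∈ Set.Icc a b, Metric.infDist (σ t) A ≤ M K L

/-- `π` is a nearest-point projection onto `A`. -/
def IsProjOn {X : Type*} [MetricSpace X] (π : X → X) (A : Set X) : Prop :=
  ∀ x : X, π x ∈ A ∧ ∀ a ∈ A, dist x (π x) ≤ dist x a

/-- `A` is `D`-contracting with respect to the nearest-point projection `π`. -/
def IsContractingWith {X : Type*} [MetricSpace X] (D : ℝ) (π : X → X) (A : Set X) : Prop :=
  IsProjOn π A ∧ ∀ x y : X, dist x y < dist x (π x) → dist (π x) (π y) < D

/-- The Hausdorff distance between `A` and `B` is at most `C`. -/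
def HausdorffLE {X : Type*} [MetricSpace X] (A B : Set X) (C : ℝ) : Prop :=
  (∀ a ∈ A, ∃ b ∈ B, dist a b ≤ C) ∧ ∀ b ∈ B, ∃ a ∈ A, dist a b ≤ C

/-- A `(lam, eps)`-quasi-isometric embedding. -/
def IsQIEmbedding {X Y : Type*} [MetricSpace X] [MetricSpace Y]
    (lam eps : ℝ) (f : X → Y) : Prop :=
  ∀ s t : X, dist s t / lam - eps ≤ dist (f s) (f t) ∧ dist (f s) (f t) ≤ lam * dist s t + eps

/-- A `(lam, eps)`-quasi-isometry: a quasi-isometric embedding with `eps`-dense image. -/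
def IsQuasiIsometry {X Y : Type*} [MetricSpace X] [MetricSpace Y]
    (lam eps : ℝ) (f : X → Y) : Prop :=
  IsQIEmbedding lam eps f ∧ ∀ y : Y, ∃ x : X, dist (f x) y ≤ eps

/-- Slimness (thin triangle condition (i)) for the set `A` with projection `π`:
for every `x` and every `y ∈ A`, the projection `π x` is within `δ` of the geodesic `[x,y]`. -/
def SlimWith {X : Type*} [MetricSpace X] (δ : ℝ) (π : X → X) (A : Set X) : Prop :=
  ∀ x : X, ∀ y ∈ A, ∀ σ : ℝ → X, σ 0 = x → σ (dist x y) = y →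
    IsGeodesicOn σ (Set.Icc 0 (dist x y)) →
    Metric.infDist (π x) (σ '' Set.Icc 0 (dist x y)) < δ

/-- The lower divergence of `γ` (defined on `I ⊆ ℝ`) at scale `r`: the infimum over `t > r`
of the infimum of lengths of paths from `γ (t-r)` to `γ (t+r)` that avoid the open
`r`-ball about `γ t`. -/
noncomputable def ldiv {X : Type*} [MetricSpace X] (γ : ℝ → X) (I : Set ℝ) (r : ℝ) : ℝ≥0∞ :=
  ⨅ (t : ℝ) (_ : r < t) (_ : Set.Icc (t - r) (t + r) ⊆ I)
    (p : ℝ → X) (a : ℝ) (b : ℝ) (_ : a ≤ b) (_ : p a = γ (t - r)) (_ : p b = γ (t + r))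
    (_ : ∀ s ∈ Set.Icc a b, r ≤ dist (p s) (γ t)),
    eVariationOn p (Set.Icc a b)

/-- The direct limit topology on the union of an increasing family of subspaces. -/
def dirLimTop {R : Type*} [TopologicalSpace R] (S : ℕ → Set R) :
    TopologicalSpace ↥(⋃ n, S n) :=
  ⨆ n, TopologicalSpace.coinduced (Set.inclusion (Set.subset_iUnion S n)) inferInstance

section

variable {X : Type*} [MetricSpace X]

lemma IsGeodesicOn.dist_eq_sub {γ : ℝ → X} {L s t : ℝ} (hγ : IsGeodesicOn γ (Icc 0 L))
    (hs : 0 ≤ s) (hst : s ≤ t) (ht : t ≤ L) : dist (γ s) (γ t) = t - s := by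
  rw [hγ ⟨hs, hst.trans ht⟩ ⟨hs.trans hst, ht⟩, abs_sub_comm, abs_of_nonneg (by linarith)]

lemma IsGeodesicOn.comp_const_add {γ : ℝ → X} {L a d : ℝ} (hγ : IsGeodesicOn γ (Icc 0 L))
    (ha : 0 ≤ a) (had : a + d ≤ L) : IsGeodesicOn (fun t => γ (a + t)) (Icc 0 d) := by
  intro s hs t ht
  rw [hγ ⟨by linarith [hs.1], by linarith [hs.2]⟩ ⟨by linarith [ht.1], by linarith [ht.2]⟩]
  congr 1
  ring

lemma GeodesicSpace.exists_midpoint [GeodesicSpace X] (p q : X) :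
    ∃ m : X, dist p m = dist p q / 2 ∧ dist q m = dist p q / 2 := by
  obtain ⟨γ, hγ0, hγ1, hγ⟩ := GeodesicSpace.geodesic p q
  have hd : 0 ≤ dist p q := dist_nonneg
  have h₀ := hγ.dist_eq_sub le_rfl (by linarith) (by linarith : dist p q / 2 ≤ dist p q)
  have h₁ := hγ.dist_eq_sub (by linarith) (by linarith : dist p q / 2 ≤ dist p q) le_rfl
  rw [hγ0] at h₀
  rw [hγ1, dist_comm] at h₁
  exact ⟨γ (dist p q / 2), by linarith, by linarith⟩

lemma CAT0Space.eq_of_dist_add_dist_eq [CAT0Space X] {w₁ w₂ p q : X}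
    (hp : dist w₁ p + dist p w₂ = dist w₁ w₂)
    (hq₁ : dist w₁ q = dist w₁ p) (hq₂ : dist q w₂ = dist p w₂) : p = q := by
  obtain ⟨m, hpm, hqm⟩ := GeodesicSpace.exists_midpoint p q
  have h₁ := CAT0Space.cn w₁ p q m hpm hqm
  have h₂ := CAT0Space.cn w₂ p q m hpm hqm
  rw [hq₁] at h₁
  rw [dist_comm w₂ q, hq₂, dist_comm w₂ p] at h₂
  by_contra hne
  have he : 0 < dist p q := dist_pos.mpr hne
  -- a positive `dist p q` makes `m` strictly closer than `p` to both `w₁` and `w₂`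
  have hm₁ : dist w₁ m < dist w₁ p := by
    nlinarith [dist_nonneg (x := w₁) (y := m), dist_nonneg (x := w₁) (y := p)]
  have hm₂ : dist w₂ m < dist p w₂ := by
    nlinarith [dist_nonneg (x := w₂) (y := m), dist_nonneg (x := p) (y := w₂)]
  have := dist_triangle_right w₁ w₂ m
  linarith

lemma CAT0Space.eqOn_of_isGeodesicOn [CAT0Space X] {σ τ : ℝ → X} {L : ℝ}
    (hσ : IsGeodesicOn σ (Icc 0 L)) (hτ : IsGeodesicOn τ (Icc 0 L))
    (h0 : σ 0 = τ 0) (hL : σ L = τ L) : EqOn σ τ (Icc 0 L) := by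
  intro b hb
  have hL0 : 0 ≤ L := hb.1.trans hb.2
  refine CAT0Space.eq_of_dist_add_dist_eq (w₁ := σ 0) (w₂ := σ L) ?_ ?_ ?_
  · rw [hσ.dist_eq_sub le_rfl hb.1 hb.2, hσ.dist_eq_sub hb.1 hb.2 le_rfl,
      hσ.dist_eq_sub le_rfl hL0 le_rfl]
    ring
  · rw [h0, hτ.dist_eq_sub le_rfl hb.1 hb.2, ← h0, hσ.dist_eq_sub le_rfl hb.1 hb.2]
  · rw [hL, hτ.dist_eq_sub hb.1 hb.2 le_rfl, ← hL, hσ.dist_eq_sub hb.1 hb.2 le_rfl]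

lemma IsQuasiGeodesicOn.of_le {K L : ℝ} {φ : ℝ → X} {I : Set ℝ}
    (h : ∀ s ∈ I, ∀ t ∈ I, s ≤ t →
      (t - s) / K - L ≤ dist (φ s) (φ t) ∧ dist (φ s) (φ t) ≤ K * (t - s) + L) :
    IsQuasiGeodesicOn K L φ I := by
  intro s hs t ht
  rcases le_total s t with hst | hts
  · rw [abs_sub_comm, abs_of_nonneg (sub_nonneg.mpr hst)]
    exact h s hs t ht hst
  · rw [abs_of_nonneg (sub_nonneg.mpr hts), dist_comm]
    exact h t ht s hs hts

lemma IsGeodesicOn.isQuasiGeodesicOn_concat {σ₁ σ₂ φ : ℝ → X} {d₁ d₂ : ℝ}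
    (h₁ : IsGeodesicOn σ₁ (Icc 0 d₁)) (h₂ : IsGeodesicOn σ₂ (Icc 0 d₂))
    (hjoin : σ₁ d₁ = σ₂ 0) (hfar : ∀ b ∈ Icc 0 d₂, d₁ ≤ dist (σ₁ 0) (σ₂ b))
    (hφ : ∀ t, φ t = if t ≤ d₁ then σ₁ t else σ₂ (t - d₁)) :
    IsQuasiGeodesicOn 3 0 φ (Icc 0 (d₁ + d₂)) := by
  refine IsQuasiGeodesicOn.of_le fun s hs t ht hst => ?_
  rw [hφ s, hφ t]
  by_cases ht₁ : t ≤ d₁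
  · rw [if_pos (hst.trans ht₁), if_pos ht₁, h₁.dist_eq_sub hs.1 hst ht₁]
    constructor <;> linarith
  by_cases hs₁ : s ≤ d₁
  · rw [if_pos hs₁, if_neg ht₁]
    have hb : t - d₁ ∈ Icc 0 d₂ := ⟨by linarith, by linarith [ht.2]⟩
    set q := σ₂ (t - d₁)
    have hxp : dist (σ₁ 0) (σ₁ s) = s := by rw [h₁.dist_eq_sub le_rfl hs.1 hs₁, sub_zero]
    have hpj : dist (σ₁ s) (σ₁ d₁) = d₁ - s := h₁.dist_eq_sub hs.1 hs₁ le_rfl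
    have hjq : dist (σ₁ d₁) q = t - d₁ := by
      rw [hjoin, h₂.dist_eq_sub le_rfl hb.1 hb.2, sub_zero]
    have hxq : d₁ ≤ dist (σ₁ 0) q := hfar _ hb
    have := dist_triangle (σ₁ 0) (σ₁ s) q
    have := dist_triangle_left (σ₁ d₁) q (σ₁ s)
    have := dist_triangle (σ₁ s) (σ₁ d₁) q
    constructor <;> linarith
  · rw [if_neg hs₁, if_neg ht₁, h₂.dist_eq_sub (by linarith) (by linarith) (by linarith [ht.2])]
    constructor <;> linarith

end

theorem stmt0_general {X : Type*} [MetricSpace X] [CAT0Space X]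
    (x y z : X) (γ : ℝ → X) (hγ1 : γ (dist y z) = z)
    (hγ : IsGeodesicOn γ (Set.Icc 0 (dist y z)))
    (π : X → X) (hπ : IsProjOn π (γ '' Set.Icc 0 (dist y z)))
    (σ₁ σ₂ : ℝ → X)
    (h₁0 : σ₁ 0 = x) (h₁1 : σ₁ (dist x (π x)) = π x)
    (h₁ : IsGeodesicOn σ₁ (Set.Icc 0 (dist x (π x))))
    (h₂0 : σ₂ 0 = π x) (h₂1 : σ₂ (dist (π x) z) = z)
    (h₂ : IsGeodesicOn σ₂ (Set.Icc 0 (dist (π x) z)))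
    (φ : ℝ → X)
    (hφ : ∀ t : ℝ, φ t = if t ≤ dist x (π x) then σ₁ t else σ₂ (t - dist x (π x))) :
    IsQuasiGeodesicOn 3 0 φ (Set.Icc 0 (dist x (π x) + dist (π x) z)) := by
  obtain ⟨s₀, hs₀, hγs₀⟩ := (hπ x).1
  have hlen : s₀ + dist (π x) z = dist y z := by
    rw [← hγs₀, ← hγ1, hγ.dist_eq_sub hs₀.1 hs₀.2 le_rfl, hγ1]
    ring
  have hsub : EqOn σ₂ (fun b => γ (s₀ + b)) (Icc 0 (dist (π x) z)) :=
    CAT0Space.eqOn_of_isGeodesicOn h₂ (hγ.comp_const_add hs₀.1 hlen.le)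
      (by simp [h₂0, hγs₀]) (by simp [h₂1, hlen, hγ1])
  refine h₁.isQuasiGeodesicOn_concat h₂ (h₁1.trans h₂0.symm) (fun b hb => ?_) hφ
  rw [h₁0, hsub hb]
  exact (hπ x).2 _ ⟨s₀ + b, ⟨by linarith [hs₀.1, hb.1], by linarith [hb.2]⟩, rfl⟩

/-- the concatenation `[x, π x] ∪ [π x, z]`, where `π` is the nearest-point
projection onto the geodesic `[y,z]`, is a `(3,0)`-quasi-geodesic. -/
theorem stmt0 {X : Type*} [MetricSpace X] [CAT0Space X]
    (x y z : X) (γ : ℝ → X) (hγ0 : γ 0 = y) (hγ1 : γ (dist y z) = z)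
    (hγ : IsGeodesicOn γ (Set.Icc 0 (dist y z)))
    (π : X → X) (hπ : IsProjOn π (γ '' Set.Icc 0 (dist y z)))
    (σ₁ σ₂ : ℝ → X)
    (h₁0 : σ₁ 0 = x) (h₁1 : σ₁ (dist x (π x)) = π x)
    (h₁ : IsGeodesicOn σ₁ (Set.Icc 0 (dist x (π x))))
    (h₂0 : σ₂ 0 = π x) (h₂1 : σ₂ (dist (π x) z) = z)
    (h₂ : IsGeodesicOn σ₂ (Set.Icc 0 (dist (π x) z)))
    (φ : ℝ → X)
    (hφ : ∀ t : ℝ, φ t = if t ≤ dist x (π x) then σ₁ t else σ₂ (t - dist x (π x))) :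
    IsQuasiGeodesicOn 3 0 φ (Set.Icc 0 (dist x (π x) + dist (π x) z)) :=
  stmt0_general x y z γ hγ1 hγ π hπ σ₁ σ₂ h₁0 h₁1 h₁ h₂0 h₂1 h₂ φ hφ
end

section
/- Let X, Y be geodesic metric spaces, f: X → Y a (λ,ε)-quasi-isometry, and γ an M-Morse quasi-geodesic in X. Then f∘γ is M''-Morse in Y, where M'' depends only on λ, ε, and M. -/
open Set Metric Topology
open scoped ENNReal

/-! Pull a quasi-geodesic `σ` of `Y` with endpoints on `f ∘ γ` back to `X` through a quasi-inverse
`g` of `f` that sends points of `f '' (γ '' I)` into `γ '' I`. Then `g ∘ σ` is a quasi-geodesic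
with endpoints on `γ`, so it stays `M`-close to `γ` by the Morse property, and applying `f` turns
this into a bound on the distance from `σ` to `f ∘ γ`. -/

theorem exists_quasiInverse_mapsTo {X Y : Type*} [MetricSpace Y] {eps : ℝ} {f : X → Y}
    (hdense : ∀ y, ∃ x, dist (f x) y ≤ eps) (A : Set X) :
    ∃ g : Y → X, (∀ y, dist (f (g y)) y ≤ eps) ∧ MapsTo g (f '' A) A := by
  have hnear : ∀ y, ∃ x, dist (f x) y ≤ eps ∧ (y ∈ f '' A → x ∈ A) := by
    intro y
    by_cases hy : y ∈ f '' A
    · obtain ⟨x, hx, rfl⟩ := hy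
      obtain ⟨_, hx'⟩ := hdense (f x)
      exact ⟨x, by rw [dist_self]; exact dist_nonneg.trans hx', fun _ => hx⟩
    · obtain ⟨x, hx⟩ := hdense y
      exact ⟨x, hx, fun h => absurd h hy⟩
  choose g hg using hnear
  exact ⟨g, fun y => (hg y).1, fun y hy => (hg y).2 hy⟩

namespace IsQIEmbedding

variable {X Y : Type*} [MetricSpace X] [MetricSpace Y] {lam eps : ℝ} {f : X → Y}

theorem isQuasiGeodesicOn_of_dist_le (hf : IsQIEmbedding lam eps f) (hlam : 1 ≤ lam)
    {σ : ℝ → Y} {τ : ℝ → X} {I : Set ℝ} {K L C : ℝ} (hLC : 0 ≤ L + eps + 2 * C)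
    (hσ : IsQuasiGeodesicOn K L σ I) (hτ : ∀ s ∈ I, dist (f (τ s)) (σ s) ≤ C) :
    IsQuasiGeodesicOn (lam * K) (lam * (L + eps + 2 * C)) τ I := by
  have hlam0 : 0 < lam := one_pos.trans_le hlam
  intro s hs u hu
  have hcomp : |dist (f (τ s)) (f (τ u)) - dist (σ s) (σ u)| ≤ 2 * C := by
    have := dist_dist_dist_le (f (τ s)) (f (τ u)) (σ s) (σ u)
    rw [Real.dist_eq] at this
    linarith [hτ s hs, hτ u hu]
  replace hcomp := abs_le.mp hcomp
  obtain ⟨hlow, hup⟩ := hσ s hs u hu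
  obtain ⟨hflow, hfup⟩ := hf (τ s) (τ u)
  constructor
  · have hshrink : (L + eps + 2 * C) / lam ≤ lam * (L + eps + 2 * C) :=
      (div_le_self hLC hlam).trans (le_mul_of_one_le_left hLC hlam)
    have : |s - u| / K / lam ≤ dist (τ s) (τ u) + (L + eps + 2 * C) / lam := by
      rw [div_le_iff₀ hlam0, add_mul, div_mul_cancel₀ _ hlam0.ne']
      linarith
    rw [mul_comm, ← div_div]
    linarith
  · have : dist (τ s) (τ u) / lam ≤ K * |s - u| + (L + eps + 2 * C) := by linarith
    rw [div_le_iff₀ hlam0] at this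
    linarith

theorem infDist_image_le (hf : IsQIEmbedding lam eps f) (hlam : 0 < lam) (x : X) {A : Set X}
    (hA : A.Nonempty) : infDist (f x) (f '' A) ≤ lam * infDist x A + eps := by
  have : (infDist (f x) (f '' A) - eps) / lam ≤ infDist x A := by
    refine (le_infDist hA).mpr fun a ha => ?_
    rw [div_le_iff₀ hlam]
    linarith [infDist_le_dist_of_mem (mem_image_of_mem f ha) (x := f x), (hf x a).2]
  rw [div_le_iff₀ hlam] at this
  linarith

end IsQIEmbedding

theorem stmt2_general (lam eps : ℝ) (hlam : 1 ≤ lam) (M : ℝ → ℝ → ℝ) :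
    ∃ M'' : ℝ → ℝ → ℝ,
      ∀ (X : Type*) (Y : Type*) [MetricSpace X] [GeodesicSpace X]
        [MetricSpace Y] [GeodesicSpace Y]
        (f : X → Y), IsQuasiIsometry lam eps f →
        ∀ (K L : ℝ), 1 ≤ K → 0 ≤ L →
        ∀ (γ : ℝ → X) (I : Set ℝ), IsQuasiGeodesicOn K L γ I →
        IsMorseWith M (γ '' I) →
        IsMorseWith M'' ((f ∘ γ) '' I) := by
  refine ⟨fun K L => lam * M (lam * K) (lam * (L + eps + 2 * eps)) + 2 * eps, ?_⟩
  intro X Y _ _ _ _ f hf K L hK hL γ I hγ hMorse Kσ Lσ hKσ hLσ σ a b hab hσ hσa hσb t ht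
  rw [image_comp] at hσa hσb ⊢
  have heps : 0 ≤ eps := dist_nonneg.trans (hf.2 (σ a)).choose_spec
  obtain ⟨g, hgf, hgA⟩ := exists_quasiInverse_mapsTo hf.2 (γ '' I)
  have hpull := hf.1.isQuasiGeodesicOn_of_dist_le hlam (by linarith) hσ
    (τ := g ∘ σ) (C := eps) fun s _ => hgf (σ s)
  have hclose : infDist (g (σ t)) (γ '' I) ≤ M (lam * Kσ) (lam * (Lσ + eps + 2 * eps)) :=
    hMorse _ _ (one_le_mul_of_one_le_of_one_le hlam hKσ) (mul_nonneg (by linarith) (by linarith))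
      (g ∘ σ) a b hab hpull (hgA hσa) (hgA hσb) t ht
  have hne : (γ '' I).Nonempty := ⟨_, hgA hσa⟩
  calc infDist (σ t) (f '' (γ '' I))
      ≤ infDist (f (g (σ t))) (f '' (γ '' I)) + dist (σ t) (f (g (σ t))) :=
        infDist_le_infDist_add_dist
    _ ≤ lam * infDist (g (σ t)) (γ '' I) + eps + eps := by
        gcongr
        · exact hf.1.infDist_image_le (by linarith) _ hne
        · rw [dist_comm]; exact hgf _
    _ ≤ lam * M (lam * Kσ) (lam * (Lσ + eps + 2 * eps)) + 2 * eps := by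
        linarith [mul_le_mul_of_nonneg_left hclose (by linarith : 0 ≤ lam)]

/-- the image of an `M`-Morse quasi-geodesic under a `(lam,eps)`-quasi-isometry
of geodesic metric spaces is `M''`-Morse, with `M''` depending only on `lam`, `eps`, `M`. -/
theorem stmt2 (lam eps : ℝ) (hlam : 1 ≤ lam) (heps : 0 ≤ eps) (M : ℝ → ℝ → ℝ) :
    ∃ M'' : ℝ → ℝ → ℝ,
      ∀ (X : Type*) (Y : Type*) [MetricSpace X] [GeodesicSpace X]
        [MetricSpace Y] [GeodesicSpace Y]
        (f : X → Y), IsQuasiIsometry lam eps f →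
        ∀ (K L : ℝ), 1 ≤ K → 0 ≤ L →
        ∀ (γ : ℝ → X) (I : Set ℝ), IsQuasiGeodesicOn K L γ I →
        IsMorseWith M (γ '' I) →
        IsMorseWith M'' ((f ∘ γ) '' I) :=
  stmt2_general lam eps hlam M
end

section
/- Let X be a CAT(0) space, γ a geodesic in X, and x, y points not on γ. Set D = d(π_γ(x), π_γ(y)) and write d(x,π_γ(x)) = aD, d(x,y) = bD, d(y,π_γ(y)) = cD. Then every point z on the geodesic segment [x,y] satisfies d(z, γ) ≥ D(a + c − b)/2. -/
open Set Metric Topology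
open scoped ENNReal

/-! The distance to `γ` is `1`-Lipschitz and is attained at `π`, so for `z` on `[x, y]`
`aD = d(x, γ) ≤ d(x, z) + d(z, γ)` and `cD = d(y, γ) ≤ d(z, y) + d(z, γ)`; adding these and
using `d(x, z) + d(z, y) = bD` gives the bound. -/

theorem IsProjOn.dist_eq_infDist {X : Type*} [MetricSpace X] {π : X → X} {A : Set X}
    (hπ : IsProjOn π A) (x : X) : dist x (π x) = infDist x A :=
  le_antisymm ((le_infDist ⟨π x, (hπ x).1⟩).2 (hπ x).2) (infDist_le_dist_of_mem (hπ x).1)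

theorem IsGeodesicOn.dist_add_dist_eq {X : Type*} [MetricSpace X] {σ : ℝ → X} {L t : ℝ}
    (hσ : IsGeodesicOn σ (Icc 0 L)) (ht : t ∈ Icc 0 L) :
    dist (σ 0) (σ t) + dist (σ t) (σ L) = L := by
  have hL : 0 ≤ L := ht.1.trans ht.2
  rw [hσ ⟨le_rfl, hL⟩ ht, hσ ht ⟨hL, le_rfl⟩, abs_of_nonpos (by linarith [ht.1]),
    abs_of_nonpos (by linarith [ht.2])]
  ring

theorem infDist_add_infDist_le {X : Type*} [MetricSpace X] (A : Set X) (x y z : X) :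
    infDist x A + infDist y A ≤ dist x z + dist z y + 2 * infDist z A := by
  have hx := infDist_le_infDist_add_dist (x := x) (y := z) (s := A)
  have hy := infDist_le_infDist_add_dist (x := y) (y := z) (s := A)
  rw [dist_comm y z] at hy
  linarith

theorem stmt4_general {X : Type*} [MetricSpace X]
    (γ : ℝ → X) (I : Set ℝ)
    (π : X → X) (hπ : IsProjOn π (γ '' I))
    (x y : X)
    (D a b c : ℝ)
    (ha : dist x (π x) = a * D) (hb : dist x y = b * D) (hc : dist y (π y) = c * D)
    (σ : ℝ → X) (hσ0 : σ 0 = x) (hσ1 : σ (dist x y) = y)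
    (hσ : IsGeodesicOn σ (Set.Icc 0 (dist x y))) :
    ∀ t ∈ Set.Icc 0 (dist x y),
      D * (a + c - b) / 2 ≤ Metric.infDist (σ t) (γ '' I) := by
  intro t ht
  have hsplit := hσ.dist_add_dist_eq ht
  rw [hσ0, hσ1] at hsplit
  have hsum := infDist_add_infDist_le (γ '' I) x y (σ t)
  rw [← hπ.dist_eq_infDist, ← hπ.dist_eq_infDist, ha, hc, hsplit, hb] at hsum
  linarith

/-- with `D = d(π x, π y) > 0`, `aD = d(x, π x)`, `bD = d(x,y)`,
`cD = d(y, π y)`, every point `z` on `[x,y]` satisfies `d(z, γ) ≥ D(a+c-b)/2`. -/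
theorem stmt4 {X : Type*} [MetricSpace X] [CAT0Space X]
    (γ : ℝ → X) (I : Set ℝ) (hγ : IsGeodesicOn γ I)
    (π : X → X) (hπ : IsProjOn π (γ '' I))
    (x y : X) (hx : x ∉ γ '' I) (hy : y ∉ γ '' I)
    (D a b c : ℝ) (hD : D = dist (π x) (π y)) (hDpos : 0 < D)
    (ha : dist x (π x) = a * D) (hb : dist x y = b * D) (hc : dist y (π y) = c * D)
    (σ : ℝ → X) (hσ0 : σ 0 = x) (hσ1 : σ (dist x y) = y)
    (hσ : IsGeodesicOn σ (Set.Icc 0 (dist x y))) :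
    ∀ t ∈ Set.Icc 0 (dist x y),
      D * (a + c - b) / 2 ≤ Metric.infDist (σ t) (γ '' I) :=
  stmt4_general γ I π hπ x y D a b c ha hb hc σ hσ0 hσ1 hσ
end

section
/- If a geodesic α in a CAT(0) space is δ-slim (i.e., for all x ∈ X and y ∈ α, d(π_α(x), [x,y]) < δ), then α is 6δ-contracting: any metric ball not intersecting α projects onto α to a set of diameter at most 6δ. -/
open Set Metric Topology
open scoped ENNReal

/-! Along a geodesic segment `[y, a]` of a CAT(0) space every point is within
`max (d(x, y)) (d(x, a))` of `x`. For `a = π x` and `d(x, y) ≤ d(x, π x)`, slimness on `[y, π x]`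
then gives `d(x, π y) < d(x, π x) + δ`, while slimness on `[x, π y]` gives
`d(x, π x) + d(π x, π y) < d(x, π y) + 2δ`. Hence `d(π x, π y) < 3δ`, and the triangle inequality
through the centre of the ball gives `6δ`. -/

namespace IsGeodesicOn

variable {X : Type*} [MetricSpace X]

lemma lipschitzOnWith {σ : ℝ → X} {I : Set ℝ} (hσ : IsGeodesicOn σ I) :
    LipschitzOnWith 1 σ I :=
  LipschitzOnWith.mk_one fun _ hs _ ht => ((hσ hs ht).trans (Real.dist_eq _ _).symm).le

lemma dist_add_dist_eq_s8 {σ : ℝ → X} {L : ℝ} (hσ : IsGeodesicOn σ (Icc 0 L)) {s : ℝ}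
    (hs : s ∈ Icc 0 L) : dist (σ 0) (σ s) + dist (σ s) (σ L) = L := by
  have hL : (0 : ℝ) ≤ L := hs.1.trans hs.2
  rw [hσ ⟨le_rfl, hL⟩ hs, hσ hs ⟨hL, le_rfl⟩, abs_of_nonpos (by linarith [hs.1]),
    abs_of_nonpos (by linarith [hs.2])]
  ring

end IsGeodesicOn

namespace CAT0Space

variable {X : Type*} [MetricSpace X] [CAT0Space X]

lemma dist_sq_le_of_isGeodesicOn {τ : ℝ → X} {I : Set ℝ} (hτ : IsGeodesicOn τ I) (x : X)
    {w h : ℝ} (hh : 0 ≤ h) (hl : w - h ∈ I) (hw : w ∈ I) (hr : w + h ∈ I) :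
    dist x (τ w) ^ 2 ≤ (dist x (τ (w - h)) ^ 2 + dist x (τ (w + h)) ^ 2) / 2 - h ^ 2 := by
  have hlr : dist (τ (w - h)) (τ (w + h)) = 2 * h := by
    rw [hτ hl hr, abs_of_nonpos (by linarith)]; ring
  have hl_mid : dist (τ (w - h)) (τ w) = dist (τ (w - h)) (τ (w + h)) / 2 := by
    rw [hτ hl hw, hlr, abs_of_nonpos (by linarith)]; ring
  have hr_mid : dist (τ (w + h)) (τ w) = dist (τ (w - h)) (τ (w + h)) / 2 := by
    rw [hτ hr hw, hlr, abs_of_nonneg (by linarith)]; ring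
  have := cn x _ _ _ hl_mid hr_mid
  rw [hlr] at this
  linarith

/-- The CN inequality makes the squared distance to `x` strictly midpoint-convex along `τ`, so it
has no interior maximum. -/
theorem dist_le_max_of_isGeodesicOn {τ : ℝ → X} {a b : ℝ} (hτ : IsGeodesicOn τ (Icc a b))
    (x : X) {u : ℝ} (hu : u ∈ Icc a b) :
    dist x (τ u) ≤ max (dist x (τ a)) (dist x (τ b)) := by
  have hcont : ContinuousOn (fun t => dist x (τ t)) (Icc a b) :=
    (continuous_const.dist continuous_id).comp_continuousOn hτ.lipschitzOnWith.continuousOn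
  obtain ⟨w, hw, hmax⟩ := isCompact_Icc.exists_isMaxOn ⟨u, hu⟩ hcont
  refine (hmax hu).trans ?_
  rcases hw.1.eq_or_lt with rfl | haw
  · exact le_max_left _ _
  rcases hw.2.eq_or_lt with rfl | hwb
  · exact le_max_right _ _
  set h := min (w - a) (b - w)
  have hpos : 0 < h := lt_min (by linarith) (by linarith)
  have hl : w - h ∈ Icc a b := ⟨by linarith [min_le_left (w - a) (b - w)], by linarith⟩
  have hr : w + h ∈ Icc a b := ⟨by linarith, by linarith [min_le_right (w - a) (b - w)]⟩
  have hsq := dist_sq_le_of_isGeodesicOn hτ x hpos.le hl hw hr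
  have hl_le : dist x (τ (w - h)) ^ 2 ≤ dist x (τ w) ^ 2 := by gcongr; exact hmax hl
  have hr_le : dist x (τ (w + h)) ^ 2 ≤ dist x (τ w) ^ 2 := by gcongr; exact hmax hr
  nlinarith

end CAT0Space

namespace SlimWith

variable {X : Type*} [MetricSpace X] {δ : ℝ} {π : X → X} {A : Set X}

lemma exists_dist_lt (hslim : SlimWith δ π A) {x y : X} (hy : y ∈ A) {σ : ℝ → X}
    (hσ0 : σ 0 = x) (hσ1 : σ (dist x y) = y) (hσ : IsGeodesicOn σ (Icc 0 (dist x y))) :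
    ∃ s ∈ Icc 0 (dist x y), dist (π x) (σ s) < δ := by
  have hne : (σ '' Icc 0 (dist x y)).Nonempty := (nonempty_Icc.2 dist_nonneg).image σ
  obtain ⟨_, ⟨s, hs, rfl⟩, hlt⟩ := (infDist_lt_iff hne).1 (hslim x y hy σ hσ0 hσ1 hσ)
  exact ⟨s, hs, hlt⟩

lemma dist_add_dist_lt [GeodesicSpace X] (hslim : SlimWith δ π A) (x : X) {y : X}
    (hy : y ∈ A) : dist x (π x) + dist (π x) y < dist x y + 2 * δ := by
  obtain ⟨σ, hσ0, hσ1, hσ⟩ := GeodesicSpace.geodesic x y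
  obtain ⟨s, hs, hlt⟩ := hslim.exists_dist_lt hy hσ0 hσ1 hσ
  have hsum := hσ.dist_add_dist_eq_s8 hs
  rw [hσ0, hσ1] at hsum
  have h₁ := dist_triangle x (σ s) (π x)
  have h₂ := dist_triangle (π x) (σ s) y
  rw [dist_comm (σ s) (π x)] at h₁
  linarith

lemma dist_lt_max_add [CAT0Space X] (hslim : SlimWith δ π A) (x : X) {y a : X}
    (ha : a ∈ A) : dist x (π y) < max (dist x y) (dist x a) + δ := by
  obtain ⟨τ, hτ0, hτ1, hτ⟩ := GeodesicSpace.geodesic y a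
  obtain ⟨u, hu, hlt⟩ := hslim.exists_dist_lt ha hτ0 hτ1 hτ
  have hmax := CAT0Space.dist_le_max_of_isGeodesicOn hτ x hu
  rw [hτ0, hτ1] at hmax
  have := dist_triangle x (τ u) (π y)
  rw [dist_comm (τ u) (π y)] at this
  linarith

lemma dist_proj_lt_of_dist_le [CAT0Space X] (hslim : SlimWith δ π A) (hπ : ∀ x, π x ∈ A)
    {x y : X} (hxy : dist x y ≤ dist x (π x)) : dist (π x) (π y) < 3 * δ := by
  have h₁ := hslim.dist_add_dist_lt x (hπ y)
  have h₂ := hslim.dist_lt_max_add x (y := y) (hπ x)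
  rw [max_eq_right hxy] at h₂
  linarith

end SlimWith

theorem stmt8_general {X : Type*} [MetricSpace X] [CAT0Space X]
    (γ : ℝ → X) (I : Set ℝ)
    (π : X → X) (hπ : IsProjOn π (γ '' I))
    (δ : ℝ) (hslim : SlimWith δ π (γ '' I)) :
    ∀ (x : X) (r : ℝ), Metric.ball x r ∩ (γ '' I) = ∅ →
      ∀ y ∈ Metric.ball x r, ∀ z ∈ Metric.ball x r, dist (π y) (π z) ≤ 6 * δ := by
  intro x r hball y hy z hz
  have hπA : ∀ x, π x ∈ γ '' I := fun x => (hπ x).1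
  have hr : r ≤ dist x (π x) := by
    by_contra! h
    exact (Set.eq_empty_iff_forall_notMem.1 hball) (π x) ⟨mem_ball'.2 h, hπA x⟩
  have hy' := hslim.dist_proj_lt_of_dist_le hπA ((mem_ball'.1 hy).le.trans hr)
  have hz' := hslim.dist_proj_lt_of_dist_le hπA ((mem_ball'.1 hz).le.trans hr)
  calc dist (π y) (π z) ≤ dist (π x) (π y) + dist (π x) (π z) := dist_triangle_left _ _ _
    _ ≤ 6 * δ := by linarith

/-- a `δ`-slim geodesic in a CAT(0) space is `6δ`-contracting: any metric ball
disjoint from the geodesic projects onto it with diameter at most `6δ`. -/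
theorem stmt8 {X : Type*} [MetricSpace X] [CAT0Space X]
    (γ : ℝ → X) (I : Set ℝ) (hγ : IsGeodesicOn γ I)
    (π : X → X) (hπ : IsProjOn π (γ '' I))
    (δ : ℝ) (hslim : SlimWith δ π (γ '' I)) :
    ∀ (x : X) (r : ℝ), Metric.ball x r ∩ (γ '' I) = ∅ →
      ∀ y ∈ Metric.ball x r, ∀ z ∈ Metric.ball x r, dist (π y) (π z) ≤ 6 * δ :=
  stmt8_general γ I π hπ δ hslim
end
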